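/- Let x₁,…,xₙ ∈ [-1,1] \ {0} with |x₁| ≤ ⋯ ≤ |xₙ|, and f(x) = ∏_{i=1}^n (x - x_i). Then for every s < n/3, (1/((2s+1)(3n³)^{s+1})) ∏_{i=s+1}^n |x_i|² ≤ sup_{0 ≤ j ≤ 3s} |f^{(j)}(0)|. -/

import Mathlib

/-!
Write `A = ∏ (X - xᵢ)`. Then `A(X) · A(-X) = ± R(X²)` with `R = ∏ (X - xᵢ²)` (one Graeffe
root-squaring step). By Vieta, `|coeff_s R| = e_{n-s}(x₁², …, xₙ²)`, which dominates the product
of any `n - s` of the `xᵢ²`. On the other hand `coeff_s R = ± coeff_{2s} (A(X) A(-X))` is a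
convolution of `2s + 1` products of coefficients of `A` of degree at most `2s`, so it is at most
`(2s + 1) M²`, where `M` is the largest of them. As the product of the `xᵢ²` is at most `1`, this
improves to `(2s + 1) M`, and `M = |f⁽ʲ⁾(0)| / j!` for some `j ≤ 2s`.
-/

open Polynomial Finset
open scoped Nat

namespace Polynomial

theorem iteratedDeriv_eval {𝕜 : Type*} [NontriviallyNormedField 𝕜] (p : 𝕜[X]) (j : ℕ) :
    iteratedDeriv j (fun t => p.eval t) = fun t => (derivative^[j] p).eval t := by
  induction j generalizing p with
  | zero => simp
  | succ j ih =>
    have hderiv : (_root_.deriv fun t => p.eval t) = fun t => p.derivative.eval t := by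
      ext t; exact Polynomial.deriv p
    rw [iteratedDeriv_succ', Function.iterate_succ_apply, hderiv, ih]

theorem iteratedDeriv_eval_zero {𝕜 : Type*} [NontriviallyNormedField 𝕜] (p : 𝕜[X]) (j : ℕ) :
    iteratedDeriv j (fun t => p.eval t) 0 = j ! * p.coeff j := by
  simp only [iteratedDeriv_eval, ← coeff_zero_eq_eval_zero, coeff_iterate_derivative, zero_add,
    Nat.descFactorial_self, nsmul_eq_mul]

section CommRing

variable {R ι : Type*} [CommRing R]

theorem coeff_comp_neg_X (p : R[X]) (k : ℕ) : (p.comp (-X)).coeff k = (-1) ^ k * p.coeff k := by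
  rw [← neg_one_mul (X : R[X]), ← C_1, ← C_neg, comp_C_mul_X_coeff, mul_comm]

theorem prod_X_sub_C_mul_comp_neg_X (s : Finset ι) (x : ι → R) :
    (∏ i ∈ s, (X - C (x i))) * (∏ i ∈ s, (X - C (x i))).comp (-X) =
      C ((-1) ^ #s) * expand R 2 (∏ i ∈ s, (X - C (x i ^ 2))) := by
  rw [map_pow, map_neg, map_one, prod_comp, ← prod_mul_distrib, map_prod, ← prod_const,
    ← prod_mul_distrib]
  refine prod_congr rfl fun i _ => ?_
  simp only [sub_comp, X_comp, C_comp, map_sub, expand_X, expand_C, map_pow]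
  ring

variable [LinearOrder R] [IsStrictOrderedRing R]

theorem abs_coeff_comp_neg_X (p : R[X]) (k : ℕ) : |(p.comp (-X)).coeff k| = |p.coeff k| := by
  rw [coeff_comp_neg_X, abs_mul, abs_pow, abs_neg, abs_one, one_pow, one_mul]

theorem prod_le_abs_coeff_prod_X_sub_C (s : Finset ι) {y : ι → R} (hy : ∀ i ∈ s, 0 ≤ y i)
    {t : Finset ι} (ht : t ⊆ s) {k : ℕ} (hk : k + #t = #s) :
    ∏ i ∈ t, y i ≤ |(∏ i ∈ s, (X - C (y i))).coeff k| := by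
  have hcoeff := Multiset.prod_X_sub_C_coeff (s.val.map y) (k := k) (by simp; omega)
  rw [Multiset.map_map, Function.comp_def, Multiset.card_map, card_val, esymm_map_val] at hcoeff
  have hnonneg (u) (hu : u ∈ powersetCard (#s - k) s) : 0 ≤ ∏ i ∈ u, y i :=
    prod_nonneg fun i hi => hy i ((mem_powersetCard.mp hu).1 hi)
  rw [show ∏ i ∈ s, (X - C (y i)) = (s.val.map fun i => X - C (y i)).prod from rfl, hcoeff,
    abs_mul, abs_pow, abs_neg, abs_one, one_pow, one_mul, abs_of_nonneg (sum_nonneg hnonneg)]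
  exact single_le_sum (f := fun u => ∏ i ∈ u, y i) hnonneg (mem_powersetCard.mpr ⟨ht, by omega⟩)

theorem abs_coeff_mul_le {p q : R[X]} {m : ℕ} {a b : R} (hp : ∀ i ≤ m, |p.coeff i| ≤ a)
    (hq : ∀ i ≤ m, |q.coeff i| ≤ b) : |(p * q).coeff m| ≤ (m + 1) * (a * b) := by
  rw [coeff_mul]
  calc |∑ ij ∈ antidiagonal m, p.coeff ij.1 * q.coeff ij.2|
      ≤ ∑ ij ∈ antidiagonal m, |p.coeff ij.1 * q.coeff ij.2| := abs_sum_le_sum_abs _ _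
    _ ≤ ∑ _ij ∈ antidiagonal m, a * b := by
      refine sum_le_sum fun ij hij => ?_
      have hsum := mem_antidiagonal.mp hij
      rw [abs_mul]
      exact mul_le_mul (hp _ (by omega)) (hq _ (by omega)) (abs_nonneg _)
        ((abs_nonneg _).trans (hp 0 (Nat.zero_le m)))
    _ = (m + 1) * (a * b) := by simp

theorem abs_coeff_prod_X_sub_C_sq_le (s : Finset ι) (x : ι → R) {m : ℕ} {M : R}
    (hM : ∀ i ≤ 2 * m, |(∏ i ∈ s, (X - C (x i))).coeff i| ≤ M) :
    |(∏ i ∈ s, (X - C (x i ^ 2))).coeff m| ≤ (2 * m + 1) * M ^ 2 := by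
  have h := congr_arg (fun p => |p.coeff (2 * m)|) (prod_X_sub_C_mul_comp_neg_X s x)
  simp only [coeff_C_mul, coeff_expand_mul' two_pos, abs_mul, abs_pow, abs_neg, abs_one, one_pow,
    one_mul] at h
  rw [← h]
  refine (abs_coeff_mul_le (b := M) hM fun i hi => ?_).trans_eq (by push_cast; ring)
  rw [abs_coeff_comp_neg_X]
  exact hM i hi

theorem exists_prod_sq_le_abs_coeff_sq (s : Finset ι) (x : ι → R) {t : Finset ι} (ht : t ⊆ s)
    {m : ℕ} (hm : m + #t = #s) :
    ∃ j ≤ 2 * m, ∏ i ∈ t, x i ^ 2 ≤ (2 * m + 1) * |(∏ i ∈ s, (X - C (x i))).coeff j| ^ 2 := by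
  obtain ⟨j, hj, hjmax⟩ := exists_max_image (range (2 * m + 1))
    (fun j => |(∏ i ∈ s, (X - C (x i))).coeff j|) nonempty_range_add_one
  refine ⟨j, Nat.lt_succ_iff.mp (mem_range.mp hj), ?_⟩
  exact (prod_le_abs_coeff_prod_X_sub_C s (fun i _ => sq_nonneg (x i)) ht hm).trans
    (abs_coeff_prod_X_sub_C_sq_le s x fun i hi => hjmax i (mem_range.mpr (by omega)))

end CommRing

end Polynomial

theorem le_mul_of_le_one_of_le_mul_sq {R : Type*} [CommRing R] [LinearOrder R]
    [IsStrictOrderedRing R] {a b c : R} (hb : 0 ≤ b) (hc : 1 ≤ c) (ha₁ : a ≤ 1)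
    (ha : a ≤ c * b ^ 2) : a ≤ c * b := by
  rcases le_total b 1 with hb₁ | hb₁ <;> nlinarith

theorem Fin.card_filter_le_val (n s : ℕ) : #{i : Fin n | s ≤ (i : ℕ)} = n - s := by
  have hlt := Fin.card_filter_val_lt (n := n) (m := s)
  have hsum := card_filter_add_card_filter_not (s := univ) fun i : Fin n => (i : ℕ) < s
  simp only [not_lt, card_univ, Fintype.card_fin] at hsum
  omega

theorem stmt1_general (n : ℕ) (x : Fin n → ℝ)
    (hx1 : ∀ i, |x i| ≤ 1)
    (f : ℝ → ℝ) (hf : f = fun t => ∏ i, (t - x i))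
    (s : ℕ) (hs : 3 * s < n) :
    ∃ j ≤ 3 * s,
      (1 / ((2 * (s : ℝ) + 1) * (3 * (n : ℝ) ^ 3) ^ (s + 1))) *
          ∏ i ∈ Finset.univ.filter (fun i : Fin n => s ≤ (i : ℕ)), |x i| ^ 2 ≤
        |iteratedDeriv j f 0| := by
  simp only [sq_abs]
  set T := ∏ i ∈ Finset.univ.filter (fun i : Fin n => s ≤ (i : ℕ)), x i ^ 2
  have hT_le_one : T ≤ 1 :=
    prod_le_one (fun i _ => by positivity) fun i _ => (sq_le_one_iff_abs_le_one _).mpr (hx1 i)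
  obtain ⟨j, hj, hT⟩ := exists_prod_sq_le_abs_coeff_sq univ x (subset_univ _)
    (m := s) (by rw [Fin.card_filter_le_val n s, card_univ, Fintype.card_fin]; omega)
  set M := |(∏ i, (X - C (x i))).coeff j|
  have hTM : T ≤ (2 * s + 1) * M :=
    le_mul_of_le_one_of_le_mul_sq (abs_nonneg _) (by linarith [s.cast_nonneg (α := ℝ)])
      hT_le_one hT
  have hn : (1 : ℝ) ≤ n := by exact_mod_cast (by omega : 1 ≤ n)
  have hc : 2 * (s : ℝ) + 1 ≤ (2 * s + 1) * (3 * (n : ℝ) ^ 3) ^ (s + 1) :=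
    le_mul_of_one_le_right (by positivity) (one_le_pow₀ (by nlinarith [one_le_pow₀ (n := 3) hn]))
  have hf_eval : f = fun t => (∏ i, (X - C (x i))).eval t := by simp [hf, eval_prod]
  refine ⟨j, by omega, ?_⟩
  rw [hf_eval, iteratedDeriv_eval_zero, abs_mul, Nat.abs_cast]
  calc 1 / ((2 * s + 1) * (3 * (n : ℝ) ^ 3) ^ (s + 1)) * T ≤ 1 / (2 * s + 1) * T := by gcongr
    _ ≤ M := by rw [one_div_mul_eq_div, div_le_iff₀ (by positivity)]; linarith
    _ ≤ j ! * M := le_mul_of_one_le_left (abs_nonneg _) (by exact_mod_cast j.factorial_pos)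

/-- Lower bound for the sup of the first `3s` derivatives at `0` of a
polynomial with roots in `[-1,1]`. -/
theorem stmt1 (n : ℕ) (x : Fin n → ℝ)
    (hx0 : ∀ i, x i ≠ 0) (hx1 : ∀ i, |x i| ≤ 1)
    (hmono : ∀ i j : Fin n, i ≤ j → |x i| ≤ |x j|)
    (f : ℝ → ℝ) (hf : f = fun t => ∏ i, (t - x i))
    (s : ℕ) (hs : 3 * s < n) :
    ∃ j ≤ 3 * s,
      (1 / ((2 * (s : ℝ) + 1) * (3 * (n : ℝ) ^ 3) ^ (s + 1))) *
          ∏ i ∈ Finset.univ.filter (fun i : Fin n => s ≤ (i : ℕ)), |x i| ^ 2 ≤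
        |iteratedDeriv j f 0| :=
  stmt1_general n x hx1 f hf s hs
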